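/- For every γ > 0 and B > 0, the functions h_{B,+} and h_{B,−} are differentiable at every r ≠ 0, and the functions g_{B,+} and g_{B,−} are positive even functions on ℝ \ {0}: for every r ≠ 0 one has g_{B,±}(−r) = g_{B,±}(r) and g_{B,±}(r) > 0. -/

import Mathlib

/-!
The number `x_{B,ε}(r)` solves `F(x) = π/(γ r)` for the odd map `F(t) = (2√(t² + B²/4) + εB) t`
(`bandMap`), whose derivative `2√(t² + B²/4) + εB + 2t²/√(t² + B²/4)` is positive for `t ≠ 0`
because `2√(t² + B²/4) > B ≥ |εB|`. So `F` is an increasing bijection of `ℝ`, and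
`x_{B,ε}(r) = F⁻¹(π/(γ r))` (`bandRadius`) is odd, with negative derivative at every `r ≠ 0`.
The integrand `φ` (`bandWeight`) is even and positive off `0`, so the two branches of `h_{B,ε}`
combine into `h_{B,ε}(r) = H(|r|)` with `H(s) = (1/4π) ∫₀^{x(s)} φ` (`bandPotential`), and
`H' = (1/4π) φ(x) x' < 0`. Hence `g_{B,ε}(r) = -H'(|r|)`, which is even and positive.
-/

open MeasureTheory

open Filter Real

noncomputable section

variable {B ε γ : ℝ}

lemma half_lt_sqrt_sq_add (B : ℝ) {t : ℝ} (ht : t ≠ 0) : B / 2 < √(t ^ 2 + B ^ 2 / 4) :=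
  lt_sqrt_of_sq_lt (by nlinarith [sq_pos_of_ne_zero ht])

lemma two_sqrt_sq_add_add_pos (hB : 0 < B) (hε : |ε| ≤ 1) {t : ℝ} (ht : t ≠ 0) :
    0 < 2 * √(t ^ 2 + B ^ 2 / 4) + ε * B := by
  have hεB : -B ≤ ε * B := by nlinarith [neg_abs_le ε]
  linarith [half_lt_sqrt_sq_add B ht]

def bandMap (B ε t : ℝ) : ℝ := (2 * √(t ^ 2 + B ^ 2 / 4) + ε * B) * t

def bandMapDeriv (B ε t : ℝ) : ℝ :=
  2 * √(t ^ 2 + B ^ 2 / 4) + ε * B + 2 * t ^ 2 / √(t ^ 2 + B ^ 2 / 4)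

lemma hasDerivAt_bandMap (hB : B ≠ 0) (t : ℝ) :
    HasDerivAt (bandMap B ε) (bandMapDeriv B ε t) t := by
  have hq : t ^ 2 + B ^ 2 / 4 ≠ 0 := by positivity
  have hsqrt := ((hasDerivAt_pow 2 t).add_const (B ^ 2 / 4)).sqrt hq
  refine (((hsqrt.const_mul 2).add_const (ε * B)).mul (hasDerivAt_id' t)).congr_deriv ?_
  rw [bandMapDeriv]
  field_simp
  norm_num
  ring

lemma bandMapDeriv_pos (hB : 0 < B) (hε : |ε| ≤ 1) {t : ℝ} (ht : t ≠ 0) :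
    0 < bandMapDeriv B ε t :=
  add_pos_of_pos_of_nonneg (two_sqrt_sq_add_add_pos hB hε ht) (by positivity)

lemma bandMap_neg (t : ℝ) : bandMap B ε (-t) = -bandMap B ε t := by
  simp [bandMap]

lemma continuous_bandMap : Continuous (bandMap B ε) := by
  unfold bandMap
  fun_prop

lemma strictMono_bandMap (hB : 0 < B) (hε : |ε| ≤ 1) : StrictMono (bandMap B ε) := by
  refine strictMono_of_odd_strictMonoOn_nonneg bandMap_neg ?_
  refine strictMonoOn_of_deriv_pos (convex_Ici 0) continuous_bandMap.continuousOn fun t ht => ?_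
  rw [interior_Ici] at ht
  rw [(hasDerivAt_bandMap hB.ne' t).deriv]
  exact bandMapDeriv_pos hB hε (ne_of_gt ht)

lemma tendsto_bandMap_atTop (hB : 0 < B) (hε : |ε| ≤ 1) :
    Tendsto (bandMap B ε) atTop atTop := by
  refine tendsto_atTop_mono' atTop ?_ tendsto_id
  filter_upwards [eventually_ge_atTop (B + 1)] with t ht
  have hεB : -B ≤ ε * B := by nlinarith [neg_abs_le ε]
  have ht_le : t ≤ √(t ^ 2 + B ^ 2 / 4) := le_sqrt_of_sq_le (by nlinarith [sq_nonneg B])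
  have : 1 ≤ 2 * √(t ^ 2 + B ^ 2 / 4) + ε * B := by linarith
  show t ≤ (2 * √(t ^ 2 + B ^ 2 / 4) + ε * B) * t
  nlinarith

lemma tendsto_bandMap_atBot (hB : 0 < B) (hε : |ε| ≤ 1) :
    Tendsto (bandMap B ε) atBot atBot := by
  have := tendsto_neg_atTop_atBot.comp
    ((tendsto_bandMap_atTop hB hε).comp tendsto_neg_atBot_atTop)
  convert this using 1
  ext t
  simp [bandMap_neg]

lemma surjective_bandMap (hB : 0 < B) (hε : |ε| ≤ 1) : Function.Surjective (bandMap B ε) :=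
  continuous_bandMap.surjective (tendsto_bandMap_atTop hB hε) (tendsto_bandMap_atBot hB hε)

def bandMapInv (B ε : ℝ) : ℝ → ℝ := Function.invFun (bandMap B ε)

lemma bandMap_bandMapInv (hB : 0 < B) (hε : |ε| ≤ 1) (y : ℝ) :
    bandMap B ε (bandMapInv B ε y) = y :=
  Function.rightInverse_invFun (surjective_bandMap hB hε) y

lemma bandMapInv_bandMap (hB : 0 < B) (hε : |ε| ≤ 1) (t : ℝ) :
    bandMapInv B ε (bandMap B ε t) = t :=
  Function.leftInverse_invFun (strictMono_bandMap hB hε).injective t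

lemma bandMapInv_neg (hB : 0 < B) (hε : |ε| ≤ 1) (y : ℝ) :
    bandMapInv B ε (-y) = -bandMapInv B ε y :=
  (strictMono_bandMap hB hε).injective <| by
    rw [bandMap_neg, bandMap_bandMapInv hB hε, bandMap_bandMapInv hB hε]

lemma bandMapInv_ne_zero (hB : 0 < B) (hε : |ε| ≤ 1) {y : ℝ} (hy : y ≠ 0) :
    bandMapInv B ε y ≠ 0 := fun h0 => hy <| by
  rw [← bandMap_bandMapInv hB hε y, h0, bandMap, mul_zero]

lemma continuous_bandMapInv (hB : 0 < B) (hε : |ε| ≤ 1) : Continuous (bandMapInv B ε) := by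
  refine Monotone.continuous_of_surjective (fun a b hab => ?_)
    fun t => ⟨bandMap B ε t, bandMapInv_bandMap hB hε t⟩
  rwa [← (strictMono_bandMap hB hε).le_iff_le, bandMap_bandMapInv hB hε,
    bandMap_bandMapInv hB hε]

lemma hasDerivAt_bandMapInv (hB : 0 < B) (hε : |ε| ≤ 1) {y : ℝ} (hy : y ≠ 0) :
    HasDerivAt (bandMapInv B ε) (bandMapDeriv B ε (bandMapInv B ε y))⁻¹ y :=
  HasDerivAt.of_local_left_inverse (continuous_bandMapInv hB hε).continuousAt
    (hasDerivAt_bandMap hB.ne' _) (bandMapDeriv_pos hB hε (bandMapInv_ne_zero hB hε hy)).ne'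
    (Eventually.of_forall (bandMap_bandMapInv hB hε))

def bandRadius (B ε γ s : ℝ) : ℝ := bandMapInv B ε (π / (γ * s))

lemma bandRadius_neg (hB : 0 < B) (hε : |ε| ≤ 1) (s : ℝ) :
    bandRadius B ε γ (-s) = -bandRadius B ε γ s := by
  rw [bandRadius, bandRadius, mul_neg, div_neg, bandMapInv_neg hB hε]

lemma exists_hasDerivAt_bandRadius_neg (hB : 0 < B) (hε : |ε| ≤ 1) (hγ : 0 < γ) {s : ℝ}
    (hs : s ≠ 0) : ∃ D < 0, HasDerivAt (bandRadius B ε γ) D s := by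
  have hγs : γ * s ≠ 0 := mul_ne_zero hγ.ne' hs
  have hy : π / (γ * s) ≠ 0 := div_ne_zero pi_ne_zero hγs
  refine ⟨_, mul_neg_of_pos_of_neg ?_ ?_, (hasDerivAt_bandMapInv hB hε hy).comp s
    ((hasDerivAt_const s π).div ((hasDerivAt_id' s).const_mul γ) hγs)⟩
  · exact inv_pos.2 (bandMapDeriv_pos hB hε (bandMapInv_ne_zero hB hε hy))
  · have := pi_pos
    exact div_neg_of_neg_of_pos (by nlinarith) (by positivity)

def bandWeight (B ε t : ℝ) : ℝ := (1 / 2 + ε * B / (4 * √(t ^ 2 + B ^ 2 / 4))) * t ^ 2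

lemma continuous_bandWeight (hB : B ≠ 0) : Continuous (bandWeight B ε) := by
  have : ∀ t : ℝ, 4 * √(t ^ 2 + B ^ 2 / 4) ≠ 0 := fun t => by positivity
  unfold bandWeight
  fun_prop (disch := exact this _)

lemma bandWeight_pos (hB : 0 < B) (hε : |ε| ≤ 1) {t : ℝ} (ht : t ≠ 0) :
    0 < bandWeight B ε t := by
  have hs : 0 < √(t ^ 2 + B ^ 2 / 4) := by positivity
  have hfactor : 1 / 2 + ε * B / (4 * √(t ^ 2 + B ^ 2 / 4)) =
      (2 * √(t ^ 2 + B ^ 2 / 4) + ε * B) / (4 * √(t ^ 2 + B ^ 2 / 4)) := by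
    field_simp
    ring
  rw [bandWeight, hfactor]
  have := two_sqrt_sq_add_add_pos hB hε ht
  positivity

lemma bandWeight_neg (t : ℝ) : bandWeight B ε (-t) = bandWeight B ε t := by
  rw [bandWeight, bandWeight, neg_sq]

lemma intervalIntegral_to_zero_of_even {E : Type*} [NormedAddCommGroup E] [NormedSpace ℝ E]
    {f : ℝ → E} (hf : ∀ t, f (-t) = f t) (u : ℝ) :
    ∫ t in u..0, f t = ∫ t in 0..-u, f t := by
  have := intervalIntegral.integral_comp_neg (a := 0) (b := -u) f
  simp only [hf, neg_neg, neg_zero] at this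
  exact this.symm

def bandPotential (B ε γ s : ℝ) : ℝ :=
  1 / (4 * π) * ∫ t in (0 : ℝ)..bandRadius B ε γ s, bandWeight B ε t

lemma bandPotential_abs (hB : 0 < B) (hε : |ε| ≤ 1) (r : ℝ) :
    bandPotential B ε γ |r| = 1 / (4 * π) *
      if 0 < r then ∫ t in (0 : ℝ)..bandRadius B ε γ r, bandWeight B ε t
      else ∫ t in bandRadius B ε γ r..0, bandWeight B ε t := by
  rw [bandPotential]
  split_ifs with hr
  · rw [abs_of_pos hr]
  · rw [abs_of_nonpos (not_lt.1 hr), intervalIntegral_to_zero_of_even bandWeight_neg,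
      bandRadius_neg hB hε]

lemma exists_hasDerivAt_bandPotential_neg (hB : 0 < B) (hε : |ε| ≤ 1) (hγ : 0 < γ) {s : ℝ}
    (hs : s ≠ 0) : ∃ D < 0, HasDerivAt (bandPotential B ε γ) D s := by
  obtain ⟨D, hD, hR⟩ := exists_hasDerivAt_bandRadius_neg hB hε hγ hs
  have hw := bandWeight_pos hB hε (bandMapInv_ne_zero hB hε (div_ne_zero pi_ne_zero
    (mul_ne_zero hγ.ne' hs)))
  refine ⟨_, mul_neg_of_pos_of_neg (by positivity) (mul_neg_of_pos_of_neg hw hD),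
    (((continuous_bandWeight hB.ne').integral_hasStrictDerivAt 0 _).hasDerivAt.comp s
      hR).const_mul _⟩

end

theorem stmt_5 (γ B : ℝ) (hγ : 0 < γ) (hB : 0 < B)
    (x h g : ℝ → ℝ → ℝ)
    (hx : ∀ ε : ℝ, (ε = 1 ∨ ε = -1) → ∀ r : ℝ, r ≠ 0 →
      (2 * Real.sqrt (x ε r ^ 2 + B ^ 2 / 4) + ε * B) * x ε r = Real.pi / (γ * r))
    (hh : ∀ ε : ℝ, (ε = 1 ∨ ε = -1) → ∀ r : ℝ, r ≠ 0 →
      h ε r = (1 / (4 * Real.pi)) *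
        (if 0 < r then
          ∫ t in (0 : ℝ)..(x ε r), (1 / 2 + ε * B / (4 * Real.sqrt (t ^ 2 + B ^ 2 / 4))) * t ^ 2
         else
          ∫ t in (x ε r)..(0 : ℝ), (1 / 2 + ε * B / (4 * Real.sqrt (t ^ 2 + B ^ 2 / 4))) * t ^ 2))
    (hg : ∀ ε : ℝ, (ε = 1 ∨ ε = -1) → ∀ r : ℝ, r ≠ 0 →
      g ε r = if 0 < r then -(deriv (h ε) r) else deriv (h ε) r) :
    ∀ ε : ℝ, (ε = 1 ∨ ε = -1) →
      (∀ r : ℝ, r ≠ 0 → DifferentiableAt ℝ (h ε) r) ∧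
      (∀ r : ℝ, r ≠ 0 → g ε (-r) = g ε r ∧ 0 < g ε r) := by
  intro ε hε
  have hε1 : |ε| ≤ 1 := by rcases hε with rfl | rfl <;> simp
  have hx_eq : ∀ r, r ≠ 0 → x ε r = bandRadius B ε γ r := fun r hr =>
    (bandMapInv_bandMap hB hε1 (x ε r)).symm.trans (congrArg _ (hx ε hε r hr))
  have hh_abs : ∀ r, r ≠ 0 → h ε r = bandPotential B ε γ |r| := fun r hr => by
    rw [hh ε hε r hr, bandPotential_abs hB hε1, hx_eq r hr]
    rfl
  have hH : ∀ r, r ≠ 0 → HasDerivAt (bandPotential B ε γ) (deriv (bandPotential B ε γ) |r|) |r| ∧ deriv (bandPotential B ε γ) |r| < 0 := fun r hr => by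
    obtain ⟨D, hD, hHD⟩ := exists_hasDerivAt_bandPotential_neg hB hε1 hγ (abs_ne_zero.2 hr)
    rw [hHD.deriv]
    exact ⟨hHD, hD⟩
  have hh_deriv : ∀ r, r ≠ 0 → HasDerivAt (h ε) (deriv (bandPotential B ε γ) |r| * SignType.sign r) r :=
    fun r hr => ((hH r hr).1.comp r (hasDerivAt_abs hr)).congr_of_eventuallyEq <| by
      filter_upwards [eventually_ne_nhds hr] with s hs using hh_abs s hs
  have hg_eq : ∀ r, r ≠ 0 → g ε r = -deriv (bandPotential B ε γ) |r| := fun r hr => by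
    rw [hg ε hε r hr, (hh_deriv r hr).deriv]
    rcases hr.lt_or_gt with hr | hr <;> simp [hr, hr.not_gt]
  refine ⟨fun r hr => (hh_deriv r hr).differentiableAt, fun r hr => ⟨?_, ?_⟩⟩
  · rw [hg_eq (-r) (neg_ne_zero.2 hr), hg_eq r hr, abs_neg]
  · rw [hg_eq r hr]
    exact neg_pos.2 (hH r hr).2
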